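/- Let λ > 1, q ∈ ℕ with q ≥ 1, s > 0, and define E_i, U^{(κ)}, Q^κ and f as follows: E_i = {(x,y) : λ^{2iq}x² + λ^{−2iq}y² ≤ s²}, U^{(κ)} = ∩_{i=0}^{κ}E_i, Q^κ = U^{(κ)} \ E_{κ+1}, f(t) = arcsin(λ^t/√(1+λ^{2t})) − arcsin(1/√(1+λ^{2t})). Then for every κ ≥ 1, (Leb₂(Q^{κ−1}) − Leb₂(Q^κ))/Leb₂(Q^0) = (2·f(κq) − f((κ−1)q) − f((κ+1)q))/f(q). (This is the multiplicity distribution π(κ) of the limiting compound Poisson process for the Euclidean metric.) -/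

import Mathlib

/-!
Since `u ↦ u x² + u⁻¹ y²` is convex, a point lying in `E_0` and in `E_κ` lies in every `E_i` with
`i ≤ κ`; hence `U^{(κ)} = E_0 ∩ E_κ`. Writing `c = λ^{κq}` and `θ = arctan c`, the vertical chords
of the disc `E_0` meeting the ellipse `E_κ` are cut by the circle for `|x| ≤ s cos θ` and by the
ellipse beyond, and integrating with the primitive of `√(s² - x²)` gives
`Leb₂(U^{(κ)}) = 2s²(π - 2 arctan c)`. So `Leb₂(Q^κ) = 4s²(a_{κ+1} - a_κ)` with
`a_n = arctan λ^{nq}`, while `f(nq) = 2 a_n - π/2` and `a_0 = π/4`: both sides of the identity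
equal `(2a_κ - a_{κ-1} - a_{κ+1}) / (a_1 - a_0)`.
-/

open MeasureTheory Filter Topology Set

noncomputable section

/-- The ellipse region `E_i = {(x,y) : λ^{2iq}x² + λ^{-2iq}y² ≤ s²}`. -/
def ellipseSet (lam s : ℝ) (q i : ℕ) : Set (ℝ × ℝ) :=
  {p | lam ^ (2 * i * q) * p.1 ^ 2 + (lam ^ (2 * i * q))⁻¹ * p.2 ^ 2 ≤ s ^ 2}

/-- `U^{(κ)} = ⋂_{i=0}^{κ} E_i`. -/
def Uset (lam s : ℝ) (q κ : ℕ) : Set (ℝ × ℝ) :=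
  ⋂ i ≤ κ, ellipseSet lam s q i

/-- `Q^κ = U^{(κ)} \ E_{κ+1}`. -/
def Qset (lam s : ℝ) (q κ : ℕ) : Set (ℝ × ℝ) :=
  Uset lam s q κ \ ellipseSet lam s q (κ + 1)

/-- `f(t) = arcsin(λ^t/√(1+λ^{2t})) − arcsin(1/√(1+λ^{2t}))`. -/
def fArc (lam : ℝ) (t : ℕ) : ℝ :=
  Real.arcsin (lam ^ t / Real.sqrt (1 + lam ^ (2 * t))) -
    Real.arcsin (1 / Real.sqrt (1 + lam ^ (2 * t)))

open Real

def circlePrimitive (r x : ℝ) : ℝ := (r ^ 2 * arcsin (x / r) + x * √(r ^ 2 - x ^ 2)) / 2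

lemma continuous_circlePrimitive (r : ℝ) : Continuous (circlePrimitive r) := by
  unfold circlePrimitive
  fun_prop

lemma hasDerivAt_circlePrimitive {r x : ℝ} (hr : 0 < r) (hx : x ∈ Ioo (-r) r) :
    HasDerivAt (circlePrimitive r) √(r ^ 2 - x ^ 2) x := by
  obtain ⟨hlo, hhi⟩ := hx
  have hpos : 0 < r ^ 2 - x ^ 2 := by nlinarith
  have harcsin : HasDerivAt (fun x => arcsin (x / r)) (1 / √(1 - (x / r) ^ 2) * (1 / r)) x := by
    have hlo' : x / r ≠ -1 := by rw [Ne, div_eq_iff hr.ne']; linarith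
    have hhi' : x / r ≠ 1 := by rw [Ne, div_eq_iff hr.ne']; linarith
    simpa [Function.comp_def] using
      (hasDerivAt_arcsin hlo' hhi').comp x ((hasDerivAt_id x).div_const r)
  have hsqrt : HasDerivAt (fun x => √(r ^ 2 - x ^ 2)) (-(2 * x) / (2 * √(r ^ 2 - x ^ 2))) x := by
    simpa using ((hasDerivAt_id x).pow 2).const_sub (r ^ 2) |>.sqrt hpos.ne'
  have hscaled : √(1 - (x / r) ^ 2) = √(r ^ 2 - x ^ 2) / r := by
    rw [show 1 - (x / r) ^ 2 = (r ^ 2 - x ^ 2) / r ^ 2 by field_simp, sqrt_div hpos.le,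
      sqrt_sq hr.le]
  have hsq : √(r ^ 2 - x ^ 2) ^ 2 = r ^ 2 - x ^ 2 := sq_sqrt hpos.le
  refine (((harcsin.const_mul (r ^ 2)).add ((hasDerivAt_id x).mul hsqrt)).div_const 2).congr_deriv
    ?_
  rw [hscaled]
  field_simp
  simp only [id]
  linear_combination (-1 : ℝ) * hsq

lemma integral_sqrt_sq_sub_sq {r a b : ℝ} (hr : 0 < r) (ha : -r ≤ a) (hab : a ≤ b) (hb : b ≤ r) :
    ∫ x in a..b, √(r ^ 2 - x ^ 2) = circlePrimitive r b - circlePrimitive r a :=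
  intervalIntegral.integral_eq_sub_of_hasDeriv_right_of_le hab
    (continuous_circlePrimitive r).continuousOn
    (fun x hx => (hasDerivAt_circlePrimitive hr
      ⟨ha.trans_lt hx.1, hx.2.trans_le hb⟩).hasDerivWithinAt)
    ((by fun_prop : Continuous fun x => √(r ^ 2 - x ^ 2)).intervalIntegrable a b)

lemma circlePrimitive_mul_sin {r θ : ℝ} (hr : 0 < r) (hθ : θ ∈ Icc (-(π / 2)) (π / 2)) :
    circlePrimitive r (r * sin θ) = r ^ 2 / 2 * (θ + sin θ * cos θ) := by
  have hcos : √(r ^ 2 - (r * sin θ) ^ 2) = r * cos θ := by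
    rw [show r ^ 2 - (r * sin θ) ^ 2 = (r * cos θ) ^ 2 by
        linear_combination (-r ^ 2) * cos_sq_add_sin_sq θ,
      sqrt_sq (mul_nonneg hr.le (cos_nonneg_of_mem_Icc hθ))]
  rw [circlePrimitive, hcos, mul_div_cancel_left₀ _ hr.ne', arcsin_sin hθ.1 hθ.2]
  ring

/-- Half the length of the vertical chord at abscissa `x` of the intersection of the disc
`x² + y² ≤ s²` with the ellipse `c²x² + c⁻²y² ≤ s²`. -/
def lensHalfHeight (s c x : ℝ) : ℝ := √(min (s ^ 2 - x ^ 2) (c ^ 2 * (s ^ 2 - c ^ 2 * x ^ 2)))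

lemma continuous_lensHalfHeight (s c : ℝ) : Continuous (lensHalfHeight s c) := by
  unfold lensHalfHeight
  fun_prop

lemma lensHalfHeight_neg (s c x : ℝ) : lensHalfHeight s c (-x) = lensHalfHeight s c x := by
  simp only [lensHalfHeight, neg_sq]

lemma lensHalfHeight_eq_zero {s c x : ℝ} (hx : s ^ 2 ≤ c ^ 2 * x ^ 2) : lensHalfHeight s c x = 0 :=
  sqrt_eq_zero'.2 <| (min_le_right _ _).trans <|
    mul_nonpos_of_nonneg_of_nonpos (sq_nonneg c) (by linarith)

lemma support_lensHalfHeight {s c : ℝ} (hs : 0 ≤ s) (hc : 0 < c) :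
    Function.support (lensHalfHeight s c) ⊆ Ioc (-(s / c)) (s / c) := by
  intro x hx
  have hlt : (c * x) ^ 2 < s ^ 2 := by
    by_contra h
    exact hx (lensHalfHeight_eq_zero (by linarith [mul_pow c x 2]))
  have habs : |x| < s / c := by
    rw [lt_div_iff₀ hc, mul_comm, ← abs_of_pos hc, ← abs_mul]
    exact abs_lt_of_sq_lt_sq hlt hs
  exact ⟨(abs_lt.1 habs).1, (abs_lt.1 habs).2.le⟩

lemma lensHalfHeight_of_le {s c x : ℝ} (hc : 1 ≤ c) (hx : (1 + c ^ 2) * x ^ 2 ≤ s ^ 2) :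
    lensHalfHeight s c x = √(s ^ 2 - x ^ 2) := by
  rw [lensHalfHeight, min_eq_left]
  nlinarith [mul_nonneg (by nlinarith : 0 ≤ c ^ 2 - 1) (sub_nonneg.2 hx)]

lemma lensHalfHeight_of_ge {s c x : ℝ} (hc : 1 ≤ c) (hx : s ^ 2 ≤ (1 + c ^ 2) * x ^ 2) :
    lensHalfHeight s c x = c * √(s ^ 2 - (c * x) ^ 2) := by
  rw [lensHalfHeight, min_eq_right, sqrt_mul (sq_nonneg c), sqrt_sq (by linarith), mul_pow]
  nlinarith [mul_nonneg (by nlinarith : 0 ≤ c ^ 2 - 1) (sub_nonneg.2 hx)]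

lemma intervalIntegral_lensHalfHeight_of_le {s c a b : ℝ} (hs : 0 < s) (hc : 1 ≤ c) (ha : 0 ≤ a)
    (hab : a ≤ b) (hb : (1 + c ^ 2) * b ^ 2 ≤ s ^ 2) :
    ∫ x in a..b, lensHalfHeight s c x = circlePrimitive s b - circlePrimitive s a := by
  have hbs : b ≤ s := abs_le_of_sq_le_sq' (by nlinarith) hs.le |>.2
  rw [← integral_sqrt_sq_sub_sq hs (by linarith) hab hbs]
  refine intervalIntegral.integral_congr fun x hx => lensHalfHeight_of_le hc ?_
  rw [uIcc_of_le hab] at hx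
  calc (1 + c ^ 2) * x ^ 2 ≤ (1 + c ^ 2) * b ^ 2 := by gcongr; exacts [ha.trans hx.1, hx.2]
    _ ≤ s ^ 2 := hb

lemma intervalIntegral_lensHalfHeight_of_ge {s c a b : ℝ} (hs : 0 < s) (hc : 1 ≤ c) (ha : 0 ≤ a)
    (hab : a ≤ b) (ha' : s ^ 2 ≤ (1 + c ^ 2) * a ^ 2) (hb : c * b ≤ s) :
    ∫ x in a..b, lensHalfHeight s c x = circlePrimitive s (c * b) - circlePrimitive s (c * a) := by
  calc ∫ x in a..b, lensHalfHeight s c x = c * ∫ x in a..b, √(s ^ 2 - (c * x) ^ 2) := by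
        rw [← intervalIntegral.integral_const_mul]
        refine intervalIntegral.integral_congr fun x hx => lensHalfHeight_of_ge hc ?_
        rw [uIcc_of_le hab] at hx
        calc s ^ 2 ≤ (1 + c ^ 2) * a ^ 2 := ha'
          _ ≤ (1 + c ^ 2) * x ^ 2 := by gcongr; exact hx.1
    _ = ∫ x in c * a..c * b, √(s ^ 2 - x ^ 2) :=
        intervalIntegral.mul_integral_comp_mul_left (f := fun x => √(s ^ 2 - x ^ 2)) c
    _ = circlePrimitive s (c * b) - circlePrimitive s (c * a) :=
        integral_sqrt_sq_sub_sq hs (by nlinarith) (by gcongr) hb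

lemma integral_lensHalfHeight_eq_two_mul {s c : ℝ} (hs : 0 ≤ s) (hc : 0 < c) :
    ∫ x, lensHalfHeight s c x = 2 * ∫ x in 0..s / c, lensHalfHeight s c x := by
  have hint := (continuous_lensHalfHeight s c).intervalIntegrable (μ := volume)
  have hneg : ∫ x in -(s / c)..0, lensHalfHeight s c x = ∫ x in 0..s / c, lensHalfHeight s c x :=
    calc ∫ x in -(s / c)..0, lensHalfHeight s c x
        = ∫ x in 0..s / c, lensHalfHeight s c (-x) := by
          rw [intervalIntegral.integral_comp_neg, neg_zero]
      _ = ∫ x in 0..s / c, lensHalfHeight s c x := by simp only [lensHalfHeight_neg]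
  rw [← intervalIntegral.integral_eq_integral_of_support_subset (support_lensHalfHeight hs hc),
    ← intervalIntegral.integral_add_adjacent_intervals (hint _ 0) (hint 0 _), hneg]
  ring

lemma integral_lensHalfHeight {s c : ℝ} (hs : 0 < s) (hc : 1 ≤ c) :
    ∫ x, lensHalfHeight s c x = s ^ 2 * (π - 2 * arctan c) := by
  have hc0 : 0 < c := one_pos.trans_le hc
  set θ := arctan c
  have hcos : 0 < cos θ := cos_arctan_pos c
  have hsin : sin θ = c * cos θ := by
    have := tan_arctan c
    rwa [tan_eq_sin_div_cos, div_eq_iff hcos.ne'] at this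
  have hθ : θ ∈ Icc 0 (π / 2) := ⟨arctan_nonneg.2 hc0.le, (arctan_lt_pi_div_two c).le⟩
  have hθ_Icc : θ ∈ Icc (-(π / 2)) (π / 2) := ⟨by linarith [pi_pos, hθ.1], hθ.2⟩
  have hθ'_Icc : π / 2 - θ ∈ Icc (-(π / 2)) (π / 2) :=
    ⟨by linarith [pi_pos, hθ.2], by linarith [hθ.1]⟩
  -- The circle and the ellipse cross above `X = s cos θ`, and `c X = s sin θ`.
  set X := s * cos θ
  have hX0 : 0 ≤ X := by positivity
  have hcX : c * X = s * sin θ := by rw [hsin]; ring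
  have hX : (1 + c ^ 2) * X ^ 2 = s ^ 2 := by
    linear_combination s ^ 2 * cos_sq_add_sin_sq θ - (s ^ 2 * (sin θ + c * cos θ)) * hsin
  have hcB : c * (s / c) = s := mul_div_cancel₀ s hc0.ne'
  have hXB : X ≤ s / c := by
    rw [le_div_iff₀ hc0, mul_comm, hcX]
    exact mul_le_of_le_one_right hs.le (sin_le_one θ)
  have hint := (continuous_lensHalfHeight s c).intervalIntegrable (μ := volume)
  have hF0 : circlePrimitive s 0 = 0 := by simp [circlePrimitive]
  have hFs : circlePrimitive s s = s ^ 2 / 2 * (π / 2) := by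
    simpa using circlePrimitive_mul_sin hs (θ := π / 2) ⟨by linarith [pi_pos], le_rfl⟩
  have hFX : circlePrimitive s X = s ^ 2 / 2 * (π / 2 - θ + cos θ * sin θ) := by
    simpa [sin_pi_div_two_sub, cos_pi_div_two_sub] using circlePrimitive_mul_sin hs hθ'_Icc
  rw [integral_lensHalfHeight_eq_two_mul hs.le hc0,
    ← intervalIntegral.integral_add_adjacent_intervals (hint 0 X) (hint X _),
    intervalIntegral_lensHalfHeight_of_le hs hc le_rfl hX0 hX.le,
    intervalIntegral_lensHalfHeight_of_ge hs hc hX0 hXB hX.ge hcB.le, hcB, hcX, hF0, hFs, hFX,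
    circlePrimitive_mul_sin hs hθ_Icc]
  ring

lemma volume_setOf_sq_le (m : ℝ) : volume {y : ℝ | y ^ 2 ≤ m} = ENNReal.ofReal (2 * √m) := by
  rcases le_or_gt 0 m with hm | hm
  · have hIcc : {y : ℝ | y ^ 2 ≤ m} = Icc (-√m) √m := by
      ext y
      exact sq_le hm
    rw [hIcc, volume_Icc]
    ring_nf
  · have hempty : {y : ℝ | y ^ 2 ≤ m} = ∅ :=
      eq_empty_of_forall_notMem fun y hy => ((sq_nonneg y).trans_lt (hy.trans_lt hm)).false
    rw [hempty, sqrt_eq_zero_of_nonpos hm.le]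
    simp

lemma prod_apply_eq_ofReal_integral {α β : Type*} [MeasurableSpace α] [MeasurableSpace β]
    {μ : Measure α} {ν : Measure β} [SFinite ν] {S : Set (α × β)} (hS : MeasurableSet S)
    {w : α → ℝ} (hw : Integrable w μ) (hw0 : 0 ≤ w)
    (hslice : ∀ x, ν (Prod.mk x ⁻¹' S) = ENNReal.ofReal (w x)) :
    μ.prod ν S = ENNReal.ofReal (∫ x, w x ∂μ) := by
  rw [Measure.prod_apply hS, lintegral_congr hslice,
    ofReal_integral_eq_lintegral_ofReal hw (ae_of_all _ hw0)]

lemma volume_disc_inter_ellipse {s c : ℝ} (hs : 0 < s) (hc : 1 ≤ c) :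
    volume {p : ℝ × ℝ | p.1 ^ 2 + p.2 ^ 2 ≤ s ^ 2 ∧ c ^ 2 * p.1 ^ 2 + (c ^ 2)⁻¹ * p.2 ^ 2 ≤ s ^ 2}
      = ENNReal.ofReal (2 * s ^ 2 * (π - 2 * arctan c)) := by
  have hc0 : 0 < c := one_pos.trans_le hc
  have hmeas : MeasurableSet
      {p : ℝ × ℝ | p.1 ^ 2 + p.2 ^ 2 ≤ s ^ 2 ∧ c ^ 2 * p.1 ^ 2 + (c ^ 2)⁻¹ * p.2 ^ 2 ≤ s ^ 2} := by
    simp only [ofPred_and]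
    exact (measurableSet_le (by fun_prop) measurable_const).inter
      (measurableSet_le (by fun_prop) measurable_const)
  have hslice (x : ℝ) : Prod.mk x ⁻¹'
      {p : ℝ × ℝ | p.1 ^ 2 + p.2 ^ 2 ≤ s ^ 2 ∧ c ^ 2 * p.1 ^ 2 + (c ^ 2)⁻¹ * p.2 ^ 2 ≤ s ^ 2}
      = {y | y ^ 2 ≤ min (s ^ 2 - x ^ 2) (c ^ 2 * (s ^ 2 - c ^ 2 * x ^ 2))} := by
    ext y
    have hell : c ^ 2 * x ^ 2 + (c ^ 2)⁻¹ * y ^ 2 ≤ s ^ 2 ↔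
        y ^ 2 ≤ c ^ 2 * (s ^ 2 - c ^ 2 * x ^ 2) := by
      rw [← inv_mul_le_iff₀ (by positivity)]
      constructor <;> intro h <;> linarith
    simp only [mem_preimage, mem_ofPred_eq, le_min_iff, hell]
    constructor <;> rintro ⟨h1, h2⟩ <;> exact ⟨by linarith, h2⟩
  have hint : Integrable (lensHalfHeight s c) :=
    (continuous_lensHalfHeight s c).integrable_of_hasCompactSupport <|
      HasCompactSupport.of_support_subset_isCompact isCompact_Icc
        ((support_lensHalfHeight hs.le hc0).trans Ioc_subset_Icc_self)
  rw [Measure.volume_eq_prod,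
    prod_apply_eq_ofReal_integral hmeas (w := fun x => 2 * lensHalfHeight s c x)
    (hint.const_mul 2) (fun x => mul_nonneg zero_le_two (sqrt_nonneg _))
    (fun x => by rw [hslice, volume_setOf_sq_le]; rfl),
    integral_const_mul, integral_lensHalfHeight hs hc]
  ring_nf

lemma convexOn_mul_add_inv_mul {a b : ℝ} (ha : 0 ≤ a) (hb : 0 ≤ b) :
    ConvexOn ℝ (Ioi 0) fun u : ℝ => u * a + u⁻¹ * b := by
  have hinv : ConvexOn ℝ (Ioi 0) fun u : ℝ => u⁻¹ := by
    simpa using convexOn_zpow (𝕜 := ℝ) (-1)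
  refine (((convexOn_id (convex_Ioi 0)).smul ha).add (hinv.smul hb)).congr fun u _ => ?_
  simp only [Pi.add_apply, id, smul_eq_mul]
  ring

lemma mem_ellipseSet_of_le {lam s : ℝ} (hlam : 1 ≤ lam) {q i κ : ℕ} (hi : i ≤ κ) {p : ℝ × ℝ}
    (h0 : p ∈ ellipseSet lam s q 0) (hκ : p ∈ ellipseSet lam s q κ) : p ∈ ellipseSet lam s q i := by
  simp only [ellipseSet, mem_ofPred_eq, mul_zero, zero_mul, pow_zero, inv_one, one_mul] at h0 hκ ⊢
  have hmem : lam ^ (2 * i * q) ∈ Icc 1 (lam ^ (2 * κ * q)) :=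
    ⟨one_le_pow₀ hlam, pow_le_pow_right₀ hlam (by gcongr)⟩
  have hconv := (convexOn_mul_add_inv_mul (sq_nonneg p.1) (sq_nonneg p.2)).le_max_of_mem_Icc
    (mem_Ioi.2 one_pos) (mem_Ioi.2 (one_pos.trans_le (hmem.1.trans hmem.2))) hmem
  simp only [one_mul, inv_one] at hconv
  exact hconv.trans (max_le h0 hκ)

lemma Uset_eq_inter {lam s : ℝ} (hlam : 1 ≤ lam) (q κ : ℕ) :
    Uset lam s q κ = ellipseSet lam s q 0 ∩ ellipseSet lam s q κ := by
  refine Subset.antisymm (fun p hp => ?_) fun p ⟨h0, hκ⟩ => ?_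
  · simp only [Uset, mem_iInter] at hp
    exact ⟨hp 0 κ.zero_le, hp κ le_rfl⟩
  · simp only [Uset, mem_iInter]
    exact fun i hi => mem_ellipseSet_of_le hlam hi h0 hκ

lemma volume_Uset {lam s : ℝ} (hlam : 1 ≤ lam) (hs : 0 < s) (q κ : ℕ) :
    volume (Uset lam s q κ) = ENNReal.ofReal (2 * s ^ 2 * (π - 2 * arctan (lam ^ (κ * q)))) := by
  rw [Uset_eq_inter hlam, ← volume_disc_inter_ellipse hs (one_le_pow₀ hlam)]
  have hexp (n : ℕ) : lam ^ (2 * n * q) = (lam ^ (n * q)) ^ 2 := by rw [← pow_mul]; ring_nf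
  congr 1
  ext p
  simp only [ellipseSet, mem_inter_iff, mem_ofPred_eq, hexp, zero_mul, pow_zero, one_pow, inv_one,
    one_mul]

lemma measurableSet_Uset (lam s : ℝ) (q κ : ℕ) : MeasurableSet (Uset lam s q κ) :=
  MeasurableSet.biInter (to_countable _) fun _ _ => measurableSet_le (by fun_prop) measurable_const

lemma volume_Qset {lam s : ℝ} (hlam : 1 ≤ lam) (hs : 0 < s) (q κ : ℕ) :
    volume (Qset lam s q κ)
      = ENNReal.ofReal (4 * s ^ 2 * (arctan (lam ^ ((κ + 1) * q)) - arctan (lam ^ (κ * q)))) := by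
  have hsucc : Uset lam s q (κ + 1) = Uset lam s q κ ∩ ellipseSet lam s q (κ + 1) :=
    biInter_le_succ _ κ
  have hQ : Qset lam s q κ = Uset lam s q κ \ Uset lam s q (κ + 1) := by
    rw [Qset, hsucc, sdiff_self_inter]
  rw [hQ, measure_sdiff (hsucc ▸ inter_subset_left) (measurableSet_Uset _ _ _ _).nullMeasurableSet
    (by rw [volume_Uset hlam hs]; exact ENNReal.ofReal_ne_top), volume_Uset hlam hs,
    volume_Uset hlam hs,
    ← ENNReal.ofReal_sub _ (by nlinarith [arctan_lt_pi_div_two (lam ^ ((κ + 1) * q))])]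
  ring_nf

lemma arcsin_one_div_sqrt_one_add_sq {x : ℝ} (hx : 0 ≤ x) :
    arcsin (1 / √(1 + x ^ 2)) = π / 2 - arctan x := by
  rw [← cos_arctan, ← sin_pi_div_two_sub, arcsin_sin (by linarith [arctan_lt_pi_div_two x, pi_pos])
    (by linarith [arctan_nonneg.2 hx])]

lemma fArc_eq {lam : ℝ} (hlam : 0 ≤ lam) (t : ℕ) : fArc lam t = 2 * arctan (lam ^ t) - π / 2 := by
  rw [fArc, pow_mul', ← arctan_eq_arcsin, arcsin_one_div_sqrt_one_add_sq (by positivity)]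
  ring

theorem multiplicity_distribution_formula_general
    (lam : ℝ) (hlam : 1 < lam) (q : ℕ) (s : ℝ) (hs : 0 < s) :
    ∀ κ : ℕ, 1 ≤ κ →
      ((volume (Qset lam s q (κ - 1))).toReal - (volume (Qset lam s q κ)).toReal) /
          (volume (Qset lam s q 0)).toReal =
        (2 * fArc lam (κ * q) - fArc lam ((κ - 1) * q) - fArc lam ((κ + 1) * q)) /
          fArc lam q := by
  intro κ hκ
  obtain ⟨j, rfl⟩ := Nat.exists_eq_add_of_le' hκ
  set a : ℕ → ℝ := fun n => arctan (lam ^ (n * q)) with ha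
  have hQ (n : ℕ) : (volume (Qset lam s q n)).toReal = 4 * s ^ 2 * (a (n + 1) - a n) := by
    rw [volume_Qset hlam.le hs, ENNReal.toReal_ofReal]
    exact mul_nonneg (by positivity) (sub_nonneg.2 (arctan_strictMono.monotone
      (pow_le_pow_right₀ hlam.le (Nat.mul_le_mul_right q n.le_succ))))
  have hf (n : ℕ) : fArc lam (n * q) = 2 * a n - π / 2 := fArc_eq (by positivity) _
  have hf1 : fArc lam q = 2 * (a 1 - a 0) := by
    have h1 := hf 1
    rw [one_mul] at h1
    rw [h1, ha]
    simp only [zero_mul, pow_zero, arctan_one]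
    ring
  rw [Nat.add_sub_cancel, hQ, hQ, hQ, hf, hf, hf, hf1, zero_add]
  calc _ = (4 * s ^ 2) * (2 * a (j + 1) - a j - a (j + 1 + 1)) / ((4 * s ^ 2) * (a 1 - a 0)) := by
          ring
    _ = 2 * (2 * a (j + 1) - a j - a (j + 1 + 1)) / (2 * (a 1 - a 0)) := by
          rw [mul_div_mul_left _ _ (by positivity), mul_div_mul_left _ _ two_ne_zero]
    _ = _ := by ring

/-- for every `κ ≥ 1`,
`(Leb₂(Q^{κ-1}) − Leb₂(Q^κ))/Leb₂(Q⁰) = (2f(κq) − f((κ−1)q) − f((κ+1)q))/f(q)`,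
the multiplicity distribution of the limiting compound Poisson process for the
Euclidean metric. -/
theorem multiplicity_distribution_formula
    (lam : ℝ) (hlam : 1 < lam) (q : ℕ) (hq : 1 ≤ q) (s : ℝ) (hs : 0 < s) :
    ∀ κ : ℕ, 1 ≤ κ →
      ((volume (Qset lam s q (κ - 1))).toReal - (volume (Qset lam s q κ)).toReal) /
          (volume (Qset lam s q 0)).toReal =
        (2 * fArc lam (κ * q) - fArc lam ((κ - 1) * q) - fArc lam ((κ + 1) * q)) /
          fArc lam q :=
  multiplicity_distribution_formula_general lam hlam q s hs
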